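/- arXiv:2407.14998 — 2 statements merged into one kernel-verified Lean document; each statement's English description precedes it below -/
import Mathlib

section
/- Let F be a field and let L be a nilpotent symplectic alternating algebra of dimension 10 over F whose centre Z(L) is isotropic of dimension 4, with L³ = Z(L), and suppose L is of type C. Then for each nonzero vector u ∈ L/L² there exists a unique totally isotropic plane (2-dimensional subspace of L/L²) containing u. -/
universe u

/-- A symplectic alternating algebra (SAA) over a field `F`: a vector space with a
nondegenerate alternating bilinear form and an alternating bilinear product
satisfying `(x·y, z) = (y·z, x)`. -/
structure SAA (F : Type u) [Field F] : Type (u + 1) where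
  carrier : Type u
  [isAddCommGroup : AddCommGroup carrier]
  [isModule : Module F carrier]
  form : carrier →ₗ[F] carrier →ₗ[F] F
  mul : carrier →ₗ[F] carrier →ₗ[F] carrier
  form_alt : ∀ x, form x x = 0
  form_nondeg : ∀ x, (∀ y, form x y = 0) → x = 0
  mul_alt : ∀ x, mul x x = 0
  form_symm : ∀ x y z, form (mul x y) z = form (mul y z) x

attribute [instance] SAA.isAddCommGroup SAA.isModule

namespace SAA

variable {F : Type u} [Field F]

/-- The span of all products `u·v` with `u ∈ U`, `v ∈ V`. -/
def prodSpace (L : SAA F) (U V : Submodule F L.carrier) : Submodule F L.carrier :=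
  Submodule.span F {w | ∃ u ∈ U, ∃ v ∈ V, L.mul u v = w}

/-- Powers of the algebra: `L¹ = L`, `L^{k+1} = span {u·v : u ∈ L^k, v ∈ L}`. -/
def pow (L : SAA F) : ℕ → Submodule F L.carrier
  | 0 => ⊤
  | 1 => ⊤
  | n + 2 => L.prodSpace (L.pow (n + 1)) ⊤

/-- The centre `Z(L) = {x : x·y = 0 for all y}`. -/
def centre (L : SAA F) : Submodule F L.carrier where
  carrier := {x | ∀ y, L.mul x y = 0}
  add_mem' := by
    intro a b ha hb
    intro y
    rw [map_add, LinearMap.add_apply, ha y, hb y, add_zero]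
  zero_mem' := by
    intro y
    rw [map_zero, LinearMap.zero_apply]
  smul_mem' := by
    intro c a ha
    intro y
    rw [map_smul, LinearMap.smul_apply, ha y, smul_zero]

/-- `{x : x·a ∈ B for all a ∈ A}`. -/
def transporter (L : SAA F) (A B : Submodule F L.carrier) : Submodule F L.carrier where
  carrier := {x | ∀ a ∈ A, L.mul x a ∈ B}
  add_mem' := by
    intro u v hu hv a ha
    rw [map_add, LinearMap.add_apply]
    exact B.add_mem (hu a ha) (hv a ha)
  zero_mem' := by
    intro a ha
    rw [map_zero, LinearMap.zero_apply]
    exact B.zero_mem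
  smul_mem' := by
    intro c u hu a ha
    rw [map_smul, LinearMap.smul_apply]
    exact B.smul_mem c (hu a ha)

/-- `L` is nilpotent if some power vanishes. -/
def IsNilpotentAlg (L : SAA F) : Prop := ∃ n, L.pow n = ⊥

/-- `L` is nilpotent of class `k` if `L^{k+1} = 0` and `L^k ≠ 0`. -/
def IsClass (L : SAA F) (k : ℕ) : Prop := L.pow (k + 1) = ⊥ ∧ L.pow k ≠ ⊥

/-- A subspace is isotropic if the form vanishes identically on it. -/
def IsIsotropic (L : SAA F) (U : Submodule F L.carrier) : Prop :=
  ∀ u ∈ U, ∀ v ∈ U, L.form u v = 0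

/-- A standard basis `x₁,y₁,…,x₅,y₅` (indexed by `Fin 5 ⊕ Fin 5`, with `Sum.inl i` the
vector `x_{i+1}` and `Sum.inr i` the vector `y_{i+1}`): a basis with
`(xᵢ,xⱼ) = (yᵢ,yⱼ) = 0` and `(xᵢ,yⱼ) = δᵢⱼ`. -/
def IsStandardBasis (L : SAA F) (b : Fin 5 ⊕ Fin 5 → L.carrier) : Prop :=
  LinearIndependent F b ∧ Submodule.span F (Set.range b) = ⊤ ∧
    (∀ i j, L.form (b (Sum.inl i)) (b (Sum.inl j)) = 0) ∧
    (∀ i j, L.form (b (Sum.inr i)) (b (Sum.inr j)) = 0) ∧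
    (∀ i j : Fin 5, L.form (b (Sum.inl i)) (b (Sum.inr j)) = if i = j then 1 else 0)

/-- A presentation: a list of triples of basis indices together with the prescribed
value of the triple form on them. -/
abbrev Pres (F : Type u) : Type u :=
  List ((Fin 5 ⊕ Fin 5) × (Fin 5 ⊕ Fin 5) × (Fin 5 ⊕ Fin 5) × F)

/-- The alternating trilinear form `T(u,v,w) = (u·v, w)`. -/
def triple (L : SAA F) (u v w : L.carrier) : F := L.form (L.mul u v) w

/-- The index of the basis vector `x_{i+1}`. -/
def xi (i : Fin 5) : Fin 5 ⊕ Fin 5 := Sum.inl i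

/-- The index of the basis vector `y_{i+1}`. -/
def yi (i : Fin 5) : Fin 5 ⊕ Fin 5 := Sum.inr i

/-- `b` is a standard basis realizing the presentation `P`: the triple form takes the
listed values on the listed triples of basis vectors and vanishes on every triple of
basis vectors which is not a permutation of a listed triple. -/
def IsPresBasis (L : SAA F) (b : Fin 5 ⊕ Fin 5 → L.carrier) (P : Pres F) : Prop :=
  L.IsStandardBasis b ∧
    (∀ e ∈ P, L.triple (b e.1) (b e.2.1) (b e.2.2.1) = e.2.2.2) ∧
    (∀ i j k : Fin 5 ⊕ Fin 5,
      (∀ e ∈ P, ({i, j, k} : Multiset (Fin 5 ⊕ Fin 5)) ≠ {e.1, e.2.1, e.2.2.1}) →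
      L.triple (b i) (b j) (b k) = 0)

/-- `L` has the presentation `P` (with respect to some standard basis). -/
def HasPres (L : SAA F) (P : Pres F) : Prop := ∃ b, L.IsPresBasis b P

/-- Isomorphism of symplectic alternating algebras: a linear equivalence preserving
the form and the product. -/
def Iso (L M : SAA F) : Prop :=
  ∃ e : L.carrier ≃ₗ[F] M.carrier,
    (∀ u v, M.form (e u) (e v) = L.form u v) ∧
    (∀ u v, e (L.mul u v) = M.mul (e u) (e v))

/-- The alternating form `φ_z̄` induced on `L/L²` by `z ∈ L²` (given by
`φ_z̄(ū,v̄) = (z·u, v)`) is degenerate: some `u ∉ L²` lies in its radical. -/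
def PhiDegen (L : SAA F) (z : L.carrier) : Prop :=
  ∃ u, u ∉ L.pow 2 ∧ ∀ v, L.form (L.mul z u) v = 0

/-- Type A: there is a basis `z̄, t̄` of `L²/Z(L)` with both `φ_z̄` and `φ_t̄` degenerate. -/
def TypeA (L : SAA F) : Prop :=
  ∃ z t, z ∈ L.pow 2 ∧ t ∈ L.pow 2 ∧
    (∀ a b : F, a • z + b • t ∈ L.centre → a = 0 ∧ b = 0) ∧
    Submodule.span F {z, t} ⊔ L.centre = L.pow 2 ∧
    L.PhiDegen z ∧ L.PhiDegen t

/-- Type B: there is `0 ≠ z̄ ∈ L²/Z(L)` with `φ_z̄` degenerate, while `φ_t̄` is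
nondegenerate for every `t̄ ∉ F z̄`. -/
def TypeB (L : SAA F) : Prop :=
  ∃ z, z ∈ L.pow 2 ∧ z ∉ L.centre ∧ L.PhiDegen z ∧
    ∀ t ∈ L.pow 2, (¬∃ a : F, t - a • z ∈ L.centre) → ¬L.PhiDegen t

/-- Type C: `φ_z̄` is nondegenerate for every `0 ≠ z̄ ∈ L²/Z(L)`. -/
def TypeC (L : SAA F) : Prop :=
  ∀ z ∈ L.pow 2, z ∉ L.centre → ¬L.PhiDegen z

/-- `L` is a nilpotent SAA of dimension 10 whose centre is isotropic of dimension 4. -/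
def Cond4 (L : SAA F) : Prop :=
  L.IsNilpotentAlg ∧ Module.finrank F L.carrier = 10 ∧
    L.IsIsotropic L.centre ∧ Module.finrank F ↥L.centre = 4

/-- `L` is a nilpotent SAA of dimension 10, centre isotropic of dimension 4,
`L³ = Z(L)`, of type C. -/
def Cond4C (L : SAA F) : Prop := Cond4 L ∧ L.pow 3 = L.centre ∧ L.TypeC

/-- `L` is a SAA of dimension 10 with isotropic centre of dimension 2, nilpotent of
class `k`. -/
def Cond2 (L : SAA F) (k : ℕ) : Prop :=
  Module.finrank F L.carrier = 10 ∧ L.IsIsotropic L.centre ∧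
    Module.finrank F ↥L.centre = 2 ∧ L.IsClass k

/-- The characteristic subspace `U = {x ∈ L⁴ : x·L³ ⊆ L⁵·L²}`. -/
def Usub (L : SAA F) : Submodule F L.carrier :=
  L.pow 4 ⊓ L.transporter (L.pow 3) (L.prodSpace (L.pow 5) (L.pow 2))

end SAA

namespace SAA

variable (F : Type u) [Field F]

/-- Presentation `𝒫₁₀^{(4,1)}`: `(y₂y₃,y₄)=1, (y₁y₄,y₅)=1, (x₁y₃,y₅)=1`. -/
def P41 : Pres F := [(yi 1, yi 2, yi 3, 1), (yi 0, yi 3, yi 4, 1), (xi 0, yi 2, yi 4, 1)]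

/-- Presentation `𝒫₁₀^{(4,2)}`: `(x₁y₂,y₃)=1, (y₁y₄,y₅)=1`. -/
def P42 : Pres F := [(xi 0, yi 1, yi 2, 1), (yi 0, yi 3, yi 4, 1)]

/-- Presentation `𝒫₁₀^{(4,3)}`: `(x₁y₂,y₃)=1, (y₁y₂,y₄)=1, (y₁y₃,y₅)=1`. -/
def P43 : Pres F := [(xi 0, yi 1, yi 2, 1), (yi 0, yi 1, yi 3, 1), (yi 0, yi 2, yi 4, 1)]

/-- Presentation `𝒫₁₀^{(4,4)}(α,β)`:
`(x₁y₂,y₃)=1, (x₁y₃,y₄)=α, (x₁y₄,y₅)=β, (y₁y₂,y₅)=1, (y₁y₃,y₄)=1`. -/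
def P44 (α β : F) : Pres F :=
  [(xi 0, yi 1, yi 2, 1), (xi 0, yi 2, yi 3, α), (xi 0, yi 3, yi 4, β),
   (yi 0, yi 1, yi 4, 1), (yi 0, yi 2, yi 3, 1)]

/-- Presentation `𝒫(β)`: `(x₁y₂,y₃)=1, (x₁y₄,y₅)=β, (y₁y₂,y₅)=1, (y₁y₃,y₄)=1`. -/
def Pbeta (β : F) : Pres F :=
  [(xi 0, yi 1, yi 2, 1), (xi 0, yi 3, yi 4, β), (yi 0, yi 1, yi 4, 1), (yi 0, yi 2, yi 3, 1)]

/-- Presentation `𝒫₁₀^{(2,1)}`: `(x₃y₄,y₅)=1, (x₂y₃,y₅)=1, (x₁y₃,y₄)=1, (y₁y₂,y₅)=1`. -/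
def P21 : Pres F :=
  [(xi 2, yi 3, yi 4, 1), (xi 1, yi 2, yi 4, 1), (xi 0, yi 2, yi 3, 1), (yi 0, yi 1, yi 4, 1)]

/-- Presentation `𝒫₁₀^{(2,2)}(r)`: `(x₃y₄,y₅)=r, (x₂y₃,y₅)=1, (x₁y₃,y₄)=1, (y₁y₂,y₃)=1`. -/
def P22 (r : F) : Pres F :=
  [(xi 2, yi 3, yi 4, r), (xi 1, yi 2, yi 4, 1), (xi 0, yi 2, yi 3, 1), (yi 0, yi 1, yi 2, 1)]

/-- Presentation `𝒫₁₀^{(2,3)}`: `(x₃y₄,y₅)=1, (x₂y₃,y₅)=1, (x₁y₂,y₅)=1, (y₁y₂,y₄)=1`. -/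
def P23 : Pres F :=
  [(xi 2, yi 3, yi 4, 1), (xi 1, yi 2, yi 4, 1), (xi 0, yi 1, yi 4, 1), (yi 0, yi 1, yi 3, 1)]

/-- Presentation `𝒫₁₀^{(2,4)}(r)`:
`(x₃y₄,y₅)=r, (x₂y₃,y₅)=1, (x₁y₂,y₅)=1, (x₁y₃,y₄)=1, (y₁y₂,y₄)=1`. -/
def P24 (r : F) : Pres F :=
  [(xi 2, yi 3, yi 4, r), (xi 1, yi 2, yi 4, 1), (xi 0, yi 1, yi 4, 1),
   (xi 0, yi 2, yi 3, 1), (yi 0, yi 1, yi 3, 1)]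

/-- Presentation `𝒫₁₀^{(2,5)}(r)`: `(x₂y₃,y₅)=r, (x₃y₄,y₅)=1, (x₁y₂,y₅)=1, (y₁y₂,y₃)=1`. -/
def P25 (r : F) : Pres F :=
  [(xi 1, yi 2, yi 4, r), (xi 2, yi 3, yi 4, 1), (xi 0, yi 1, yi 4, 1), (yi 0, yi 1, yi 2, 1)]

/-- Presentation `𝒫₁₀^{(2,6)}(r)`:
`(x₂y₃,y₅)=r, (x₃y₄,y₅)=1, (x₁y₂,y₅)=1, (x₁y₃,y₄)=1, (y₁y₂,y₃)=1`. -/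
def P26 (r : F) : Pres F :=
  [(xi 1, yi 2, yi 4, r), (xi 2, yi 3, yi 4, 1), (xi 0, yi 1, yi 4, 1),
   (xi 0, yi 2, yi 3, 1), (yi 0, yi 1, yi 2, 1)]

/-- Presentation `𝒫₁₀^{(2,7)}`: `(x₂y₃,y₅)=1, (x₃y₄,y₅)=1, (x₁y₂,y₄)=1, (y₁y₂,y₃)=1`. -/
def P27 : Pres F :=
  [(xi 1, yi 2, yi 4, 1), (xi 2, yi 3, yi 4, 1), (xi 0, yi 1, yi 3, 1), (yi 0, yi 1, yi 2, 1)]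

end SAA

/-! Fix `ū ≠ 0` in `L/L²`. Type C says that `z ↦ z·u` is injective on `L²/Z(L)`, so the
functionals `φ_z̄(ū, ·)` span a space of dimension `dim L² - dim Z(L) = 2`, and their common
kernel `W` in the 4-dimensional space `L/L²` is a plane through `ū`. A totally isotropic plane through
`ū` lies in `W`, hence equals it; and `W` is itself totally isotropic, because an alternating
form on a plane that pairs trivially with one nonzero vector of the plane vanishes on it. -/

open Module Submodule

theorem LinearMap.IsAlt.eq_zero_of_finrank_le_two {K V : Type*} [Field K] [AddCommGroup V]
    [Module K V] {B : V →ₗ[K] V →ₗ[K] K} (hB : B.IsAlt) {P : Submodule K V}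
    [FiniteDimensional K P] (hP : finrank K P ≤ 2) {u : V} (hu : u ∈ P) (hu0 : u ≠ 0)
    (huP : ∀ w ∈ P, B u w = 0) {v w : V} (hv : v ∈ P) (hw : w ∈ P) : B v w = 0 := by
  by_cases hvu : v ∈ K ∙ u
  · obtain ⟨a, rfl⟩ := mem_span_singleton.1 hvu
    simp [huP w hw]
  have hle : span K {u, v} ≤ P := span_le.2 (Set.insert_subset hu (Set.singleton_subset_iff.2 hv))
  have hlt : K ∙ u < span K {u, v} :=
    lt_of_le_of_ne (span_mono (by simp)) fun h => hvu (h ▸ subset_span (by simp))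
  have : FiniteDimensional K (span K {u, v}) := finiteDimensional_of_le hle
  have hspan : span K {u, v} = P := by
    refine eq_of_le_of_finrank_le hle (hP.trans ?_)
    have := finrank_lt_finrank_of_lt hlt
    rw [finrank_span_singleton hu0] at this
    omega
  obtain ⟨a, b, rfl⟩ := mem_span_pair.1 (hspan ▸ hw)
  simp [← hB.neg u v, huP v hv, hB.self_eq_zero]

theorem Submodule.finrank_map_mkQ_add_finrank {K V : Type*} [DivisionRing K] [AddCommGroup V]
    [Module K V] {p q : Submodule K V} [FiniteDimensional K q] (h : p ≤ q) :
    finrank K (q.map p.mkQ) + finrank K p = finrank K q := by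
  have := (p.mkQ ∘ₗ q.subtype).finrank_range_add_finrank_ker
  rwa [LinearMap.range_comp, range_subtype, LinearMap.ker_comp, ker_mkQ,
    (comapSubtypeEquivOfLe h).finrank_eq] at this

namespace SAA

variable {F : Type u} [Field F] (L : SAA F)

open LinearMap (BilinForm.orthogonal BilinForm.mem_orthogonal_iff)

lemma isAlt_form : L.form.IsAlt := L.form_alt

lemma isAlt_mul : L.mul.IsAlt := L.mul_alt

lemma ker_form : LinearMap.ker L.form = ⊥ :=
  LinearMap.ker_eq_bot'.2 fun x hx => L.form_nondeg x fun y => by rw [hx, LinearMap.zero_apply]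

lemma mul_mem_pow_two (a b : L.carrier) : L.mul a b ∈ L.pow 2 :=
  subset_span ⟨a, trivial, b, trivial, rfl⟩

lemma mul_mem_pow_three {a : L.carrier} (ha : a ∈ L.pow 2) (b : L.carrier) :
    L.mul a b ∈ L.pow 3 :=
  subset_span ⟨a, ha, b, trivial, rfl⟩

lemma pow_three_le_pow_two : L.pow 3 ≤ L.pow 2 :=
  span_le.2 <| by
    rintro _ ⟨a, -, b, -, rfl⟩
    exact L.mul_mem_pow_two a b

lemma orthogonal_pow_two : BilinForm.orthogonal L.form (L.pow 2) = L.centre := by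
  ext c
  refine ⟨fun hc b => ?_, fun hc n hn => ?_⟩
  · rw [← L.isAlt_mul.neg b c, neg_eq_zero]
    exact L.form_nondeg _ fun a => by
      rw [← L.form_symm]
      exact hc _ (L.mul_mem_pow_two a b)
  · refine span_induction ?_ (by simp) (fun x y _ _ hx hy => ?_) (fun a x _ hx => ?_) hn
    · rintro _ ⟨a, -, b, -, rfl⟩
      rw [L.form_symm, ← L.isAlt_mul.neg c b, hc b, neg_zero, map_zero, LinearMap.zero_apply]
    · simp only [map_add, LinearMap.add_apply, hx, hy, add_zero]
    · simp only [map_smul, LinearMap.smul_apply, hx, smul_zero]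

lemma form_centre_pow_two {c w : L.carrier} (hc : c ∈ L.centre) (hw : w ∈ L.pow 2) :
    L.form c w = 0 :=
  L.isAlt_form.eq_iff.1 ((L.orthogonal_pow_two ▸ hc : c ∈ BilinForm.orthogonal L.form _) w hw)

lemma finrank_add_finrank_orthogonal [FiniteDimensional F L.carrier] (N : Submodule F L.carrier) :
    finrank F N + finrank F (BilinForm.orthogonal L.form N) = finrank F L.carrier := by
  have := LinearMap.BilinForm.finrank_add_finrank_orthogonal' (B := L.form) N
  rwa [L.ker_form, inf_bot_eq, finrank_bot, add_zero] at this

lemma finrank_pow_two_add_finrank_centre [FiniteDimensional F L.carrier] :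
    finrank F (L.pow 2) + finrank F L.centre = finrank F L.carrier := by
  rw [← L.orthogonal_pow_two]
  exact L.finrank_add_finrank_orthogonal _

variable {L}

lemma Cond4.finiteDimensional (h : L.Cond4) : FiniteDimensional F L.carrier :=
  Module.finite_of_finrank_pos (by rw [h.2.1]; norm_num)

lemma centre_le_pow_two (h3 : L.pow 3 = L.centre) : L.centre ≤ L.pow 2 :=
  h3 ▸ L.pow_three_le_pow_two

lemma mul_mem_centre_of_mem_pow_two (h3 : L.pow 3 = L.centre) (a : L.carrier)
    {b : L.carrier} (hb : b ∈ L.pow 2) : L.mul a b ∈ L.centre := by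
  rw [← L.isAlt_mul.neg, ← h3]
  exact neg_mem (L.mul_mem_pow_three hb a)

lemma mul_eq_zero_of_mem_pow_two (h3 : L.pow 3 = L.centre) {z w : L.carrier}
    (hz : z ∈ L.pow 2) (hw : w ∈ L.pow 2) : L.mul z w = 0 :=
  L.form_nondeg _ fun y => by
    rw [L.form_symm]
    exact L.form_centre_pow_two (h3 ▸ L.mul_mem_pow_three hw y) hz

variable (L)

lemma isAlt_form_comp_mul (z : L.carrier) : (L.form ∘ₗ L.mul z).IsAlt := fun v => by
  rw [LinearMap.comp_apply, L.form_symm, L.mul_alt, map_zero, LinearMap.zero_apply]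

variable {L}

lemma pow_two_le_ker_form_comp_mul (h3 : L.pow 3 = L.centre) {z : L.carrier}
    (hz : z ∈ L.pow 2) : L.pow 2 ≤ LinearMap.ker (L.form ∘ₗ L.mul z) := fun v hv => by
  rw [LinearMap.mem_ker, LinearMap.comp_apply, mul_eq_zero_of_mem_pow_two h3 hz hv, map_zero]

/-- The form `φ_z̄` on `L/L²`. -/
def phi (h3 : L.pow 3 = L.centre) {z : L.carrier} (hz : z ∈ L.pow 2) :
    (L.carrier ⧸ L.pow 2) →ₗ[F] (L.carrier ⧸ L.pow 2) →ₗ[F] F :=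
  LinearMap.IsRefl.liftQ₂ (L.form ∘ₗ L.mul z) (L.pow 2) (L.isAlt_form_comp_mul z).isRefl
    (pow_two_le_ker_form_comp_mul h3 hz)

lemma isAlt_phi (h3 : L.pow 3 = L.centre) {z : L.carrier} (hz : z ∈ L.pow 2) :
    (phi h3 hz).IsAlt := by
  rintro ⟨v⟩
  exact L.isAlt_form_comp_mul z v

variable (L)

def IsTotallyIsotropic (P : Submodule F (L.carrier ⧸ L.pow 2)) : Prop :=
  ∀ z ∈ L.pow 2, ∀ v w : L.carrier,
    Submodule.Quotient.mk v ∈ P → Submodule.Quotient.mk w ∈ P → L.form (L.mul z v) w = 0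

def powTwoMul (u : L.carrier) : Submodule F L.carrier :=
  (L.pow 2).map (L.mul.flip u)

/-- The common kernel of the functionals `φ_z̄(ū, ·)`, `z ∈ L²`, on `L/L²`. -/
def phiPerp (u : L.carrier) : Submodule F (L.carrier ⧸ L.pow 2) :=
  (BilinForm.orthogonal L.form (L.powTwoMul u)).map (L.pow 2).mkQ

variable {L}

lemma mem_orthogonal_powTwoMul {u v : L.carrier} :
    v ∈ BilinForm.orthogonal L.form (L.powTwoMul u) ↔
      ∀ z ∈ L.pow 2, L.form (L.mul z u) v = 0 := by
  simp [powTwoMul, BilinForm.mem_orthogonal_iff]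

lemma mk_mem_phiPerp (u : L.carrier) : Submodule.Quotient.mk u ∈ L.phiPerp u :=
  mem_map_of_mem (mem_orthogonal_powTwoMul.2 fun z _ => L.isAlt_form_comp_mul z u)

lemma IsTotallyIsotropic.le_phiPerp {P : Submodule F (L.carrier ⧸ L.pow 2)}
    (hP : L.IsTotallyIsotropic P) {u : L.carrier} (hu : Submodule.Quotient.mk u ∈ P) :
    P ≤ L.phiPerp u := by
  intro x hx
  obtain ⟨v, rfl⟩ := Submodule.Quotient.mk_surjective _ x
  exact mem_map_of_mem (mem_orthogonal_powTwoMul.2 fun z hz => hP z hz u v hu hx)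

lemma isTotallyIsotropic_phiPerp [FiniteDimensional F L.carrier] (h3 : L.pow 3 = L.centre)
    {u : L.carrier} (hu : u ∉ L.pow 2) (h2 : finrank F (L.phiPerp u) ≤ 2) :
    L.IsTotallyIsotropic (L.phiPerp u) := by
  intro z hz v w hv hw
  refine (isAlt_phi h3 hz).eq_zero_of_finrank_le_two h2 (mk_mem_phiPerp u)
    ((Quotient.mk_eq_zero _).not.2 hu) ?_ hv hw
  rintro _ ⟨x, hx, rfl⟩
  exact mem_orthogonal_powTwoMul.1 hx z hz

lemma pow_two_le_orthogonal_powTwoMul (h3 : L.pow 3 = L.centre) (u : L.carrier) :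
    L.pow 2 ≤ BilinForm.orthogonal L.form (L.powTwoMul u) := fun p hp =>
  mem_orthogonal_powTwoMul.2 fun z hz => by
    rw [L.form_symm]
    exact L.form_centre_pow_two (mul_mem_centre_of_mem_pow_two h3 u hp) hz

lemma finrank_powTwoMul_add_finrank_centre [FiniteDimensional F L.carrier] (hC : L.TypeC)
    (hZ : L.centre ≤ L.pow 2) {u : L.carrier} (hu : u ∉ L.pow 2) :
    finrank F (L.powTwoMul u) + finrank F L.centre = finrank F (L.pow 2) := by
  let g := L.mul.flip u ∘ₗ (L.pow 2).subtype
  have hker : LinearMap.ker g = L.centre.comap (L.pow 2).subtype := by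
    ext ⟨z, hz⟩
    simp only [g, LinearMap.mem_ker, mem_comap, subtype_apply, LinearMap.comp_apply,
      LinearMap.flip_apply]
    refine ⟨fun h0 => by_contra fun hzc => hC z hz hzc ⟨u, hu, fun v => ?_⟩, fun hzc => hzc u⟩
    rw [h0, map_zero, LinearMap.zero_apply]
  have := g.finrank_range_add_finrank_ker
  rwa [hker, (comapSubtypeEquivOfLe hZ).finrank_eq, LinearMap.range_comp, range_subtype] at this

lemma finrank_phiPerp (h : L.Cond4C) {u : L.carrier} (hu : u ∉ L.pow 2) :
    finrank F (L.phiPerp u) = 2 := by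
  have := h.1.finiteDimensional
  obtain ⟨⟨-, hdim, -, hZ⟩, h3, hC⟩ := h
  have h2 := L.finrank_pow_two_add_finrank_centre
  have hmul := finrank_powTwoMul_add_finrank_centre hC (centre_le_pow_two h3) hu
  have horth := L.finrank_add_finrank_orthogonal (L.powTwoMul u)
  have hW := finrank_map_mkQ_add_finrank (pow_two_le_orthogonal_powTwoMul h3 u)
  rw [phiPerp]
  omega

end SAA

/-- Lemma 2.4. If `L` is a nilpotent SAA of dimension 10 with isotropic
centre of dimension 4, `L³ = Z(L)`, of type C, then through every nonzero vector of
`L/L²` there passes a unique totally isotropic plane (a 2-dimensional subspace of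
`L/L²` which is isotropic for every form `φ_z̄`, `z ∈ L²`). -/
theorem unique_totally_isotropic_plane
    {F : Type u} [Field F] (L : SAA F) (h : L.Cond4C) :
    ∀ u : L.carrier, u ∉ L.pow 2 →
      ∃! P : Submodule F (L.carrier ⧸ L.pow 2),
        Module.finrank F ↥P = 2 ∧ Submodule.Quotient.mk u ∈ P ∧
          ∀ z ∈ L.pow 2, ∀ v w : L.carrier,
            Submodule.Quotient.mk v ∈ P → Submodule.Quotient.mk w ∈ P →
              L.form (L.mul z v) w = 0 := by
  intro u hu
  have := h.1.finiteDimensional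
  have hW := SAA.finrank_phiPerp h hu
  refine ⟨L.phiPerp u, ⟨hW, SAA.mk_mem_phiPerp u,
    SAA.isTotallyIsotropic_phiPerp h.2.1 hu hW.le⟩, ?_⟩
  rintro P ⟨hP, huP, hPiso⟩
  exact eq_of_le_of_finrank_le (SAA.IsTotallyIsotropic.le_phiPerp hPiso huP) (by rw [hW, hP])
end

section
/- Let F be a field and let L be a nilpotent symplectic alternating algebra of dimension 10 over F whose centre Z(L) is isotropic of dimension 4, with L³ = Z(L), of type C. Suppose L has presentation 𝒫₁₀^{(4,4)}(α,β) with respect to a standard basis x₁,y₁,…,x₅,y₅ and presentation 𝒫₁₀^{(4,4)}(α̃,β̃) with respect to a standard basis x̃₁,ỹ₁,…,x̃₅,ỹ₅, where x̃₁ + Z(L) = x₁ + Z(L) and ỹ₁ + Z(L) = y₁ + Z(L). Then α̃ = α and β̃ = β. -/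
universe u

/-!
Since `x̃₁ - x₁` and `ỹ₁ - y₁` are central, the alternating forms `(x₁·u, v)` and `(y₁·u, v)`
do not depend on the presentation. Both vanish on `x₁, …, x₅, y₁` and are read off from the
presentation as the alternating matrices `X(α, β)` and `Y` in the coordinates along
`y₂, …, y₅`. Computing them in the other basis gives `X(α̃, β̃) = M X(α, β) Mᵀ` and `Y = M Y Mᵀ`,
where the rows of `M` are the coordinates of `ỹ₂, …, ỹ₅`. Under congruence the Pfaffian of a
`4 × 4` alternating matrix is multiplied by `det M`; since `Pf Y = 1`, `Pf X(α, β) = β` and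
`Pf (X(α, β) + Y) = α + β + 1`, this forces `det M = 1`, `β̃ = β` and `α̃ = α`.
-/

namespace Matrix

variable {R : Type*} [CommRing R]

def IsAlt {n : Type*} (A : Matrix n n R) : Prop := Aᵀ = -A ∧ ∀ i, A i i = 0

theorem IsAlt.add {n : Type*} {A B : Matrix n n R} (hA : A.IsAlt) (hB : B.IsAlt) :
    (A + B).IsAlt :=
  ⟨by rw [transpose_add, hA.1, hB.1, neg_add], fun i => by simp [hA.2 i, hB.2 i]⟩

theorem of_dotProduct_mulVec {m n : Type*} [Fintype n] (v : m → n → R) (A : Matrix n n R) :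
    of (fun k l => v k ⬝ᵥ A *ᵥ v l) = of v * A * (of v)ᵀ := by
  ext k l
  simp only [of_apply, mul_apply, transpose_apply, dotProduct, mulVec, Finset.mul_sum,
    Finset.sum_mul]
  rw [Finset.sum_comm]
  exact Finset.sum_congr rfl fun _ _ => Finset.sum_congr rfl fun _ _ => by ring

def pfaffianFour (A : Matrix (Fin 4) (Fin 4) R) : R :=
  A 0 1 * A 2 3 - A 0 2 * A 1 3 + A 0 3 * A 1 2

theorem pfaffianFour_mul_mul_transpose (M : Matrix (Fin 4) (Fin 4) R)
    {A : Matrix (Fin 4) (Fin 4) R} (hA : A.IsAlt) :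
    pfaffianFour (M * A * Mᵀ) = M.det * pfaffianFour A := by
  have hskew (i j) : A j i = -A i j := congrFun (congrFun hA.1 i) j
  have hA : A = !![0, A 0 1, A 0 2, A 0 3; -A 0 1, 0, A 1 2, A 1 3;
      -A 0 2, -A 1 2, 0, A 2 3; -A 0 3, -A 1 3, -A 2 3, 0] := by
    ext i j
    fin_cases i <;> fin_cases j <;> simp [hA.2] <;> exact hskew _ _
  rw [hA, det_succ_row_zero]
  simp [pfaffianFour, det_fin_three, mul_apply, Fin.sum_univ_four, Fin.succAbove]
  ring

end Matrix

open Matrix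

namespace SAA

variable {F : Type u} [Field F] (L : SAA F)

theorem form_swap (x y : L.carrier) : L.form x y = -L.form y x := by
  have h := L.form_alt (x + y)
  simp only [map_add, LinearMap.add_apply, L.form_alt] at h
  linear_combination h

theorem mul_swap (x y : L.carrier) : L.mul x y = -L.mul y x := by
  have h := L.mul_alt (x + y)
  simp only [map_add, LinearMap.add_apply, L.mul_alt, zero_add, add_zero] at h
  exact eq_neg_of_add_eq_zero_right h

theorem form_mul_swap (u v w : L.carrier) :
    L.form (L.mul u v) w = -L.form (L.mul u w) v := by
  rw [L.form_symm u v w, L.form_symm u w v, L.mul_swap w v, map_neg, LinearMap.neg_apply,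
    neg_neg]

theorem mul_eq_of_sub_mem_centre {x x' : L.carrier} (h : x' - x ∈ L.centre) (u : L.carrier) :
    L.mul x' u = L.mul x u := by
  rw [← sub_eq_zero, ← LinearMap.sub_apply, ← map_sub]
  exact h u

/-- `u ↦ ((u, x₂), …, (u, x₅))`: minus the coordinates of `u` along `y₂, …, y₅`. -/
def pairX (b : Fin 5 ⊕ Fin 5 → L.carrier) : L.carrier →ₗ[F] Fin 4 → F :=
  LinearMap.pi fun i => L.form.flip (b (xi i.succ))

variable {L} {b : Fin 5 ⊕ Fin 5 → L.carrier}

theorem IsStandardBasis.form_inr_inl (hb : L.IsStandardBasis b) (i j : Fin 5) :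
    L.form (b (Sum.inr i)) (b (Sum.inl j)) = if j = i then -1 else 0 := by
  rw [L.form_swap, hb.2.2.2.2 j i]
  split_ifs <;> simp

theorem IsStandardBasis.pairX_inl (hb : L.IsStandardBasis b) (j : Fin 5) :
    L.pairX b (b (Sum.inl j)) = 0 := by
  ext i
  exact hb.2.2.1 j i.succ

theorem IsStandardBasis.pairX_inr (hb : L.IsStandardBasis b) (j : Fin 5) :
    L.pairX b (b (Sum.inr j)) = fun i => if i.succ = j then -1 else 0 := by
  ext i
  simp [pairX, xi, hb.form_inr_inl]

theorem IsPresBasis.P44_triple_eq_zero {α β : F} (hb : L.IsPresBasis b (P44 F α β))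
    {i j k : Fin 5 ⊕ Fin 5}
    (h₁ : ({i, j, k} : Multiset (Fin 5 ⊕ Fin 5)) ≠ {xi 0, yi 1, yi 2})
    (h₂ : ({i, j, k} : Multiset (Fin 5 ⊕ Fin 5)) ≠ {xi 0, yi 2, yi 3})
    (h₃ : ({i, j, k} : Multiset (Fin 5 ⊕ Fin 5)) ≠ {xi 0, yi 3, yi 4})
    (h₄ : ({i, j, k} : Multiset (Fin 5 ⊕ Fin 5)) ≠ {yi 0, yi 1, yi 4})
    (h₅ : ({i, j, k} : Multiset (Fin 5 ⊕ Fin 5)) ≠ {yi 0, yi 2, yi 3}) :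
    L.form (L.mul (b i) (b j)) (b k) = 0 := by
  refine hb.2.2 i j k fun e he => ?_
  simp only [P44, List.mem_cons, List.not_mem_nil, or_false] at he
  rcases he with rfl | rfl | rfl | rfl | rfl
  exacts [h₁, h₂, h₃, h₄, h₅]

def P44FormX (α β : F) : Matrix (Fin 4) (Fin 4) F :=
  !![0, 1, 0, 0; -1, 0, α, 0; 0, -α, 0, β; 0, 0, -β, 0]

def P44FormY : Matrix (Fin 4) (Fin 4) F :=
  !![0, 0, 0, 1; 0, 0, 1, 0; 0, -1, 0, 0; -1, 0, 0, 0]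

theorem IsStandardBasis.form_mul_eq_of_basis (hb : L.IsStandardBasis b) {z : L.carrier}
    {A : Matrix (Fin 4) (Fin 4) F}
    (h : ∀ j k, L.form (L.mul z (b j)) (b k) = L.pairX b (b j) ⬝ᵥ A *ᵥ L.pairX b (b k))
    (u v : L.carrier) : L.form (L.mul z u) v = L.pairX b u ⬝ᵥ A *ᵥ L.pairX b v := by
  suffices L.form ∘ₗ L.mul z = (A.toLinearMap₂' F).compl₁₂ (L.pairX b) (L.pairX b) by
    simpa [toLinearMap₂'_apply'] using LinearMap.congr_fun₂ this u v
  let B := Module.Basis.mk hb.1 hb.2.1.ge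
  refine B.ext fun j => B.ext fun k => ?_
  simpa [B, toLinearMap₂'_apply'] using h j k

theorem IsPresBasis.form_mul_x₁ {α β : F}
    (hb : L.IsPresBasis b (P44 F α β)) (u v : L.carrier) :
    L.form (L.mul (b (xi 0)) u) v = L.pairX b u ⬝ᵥ P44FormX α β *ᵥ L.pairX b v := by
  have hv₁ := hb.2.1 (xi 0, yi 1, yi 2, 1) (by simp [P44])
  have hv₂ := hb.2.1 (xi 0, yi 2, yi 3, α) (by simp [P44])
  have hv₃ := hb.2.1 (xi 0, yi 3, yi 4, β) (by simp [P44])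
  simp only [triple, xi, yi] at hv₁ hv₂ hv₃
  refine hb.1.form_mul_eq_of_basis (fun j k => ?_) u v
  -- each triple `(x₁, b j, b k)` is listed, a transposition of a listed triple, or zero
  rcases j with j | j <;> rcases k with k | k <;> fin_cases j <;> fin_cases k <;>
    simp [xi, hb.1.pairX_inl, hb.1.pairX_inr, P44FormX, mulVec, dotProduct, Fin.sum_univ_four,
      hv₁, hv₂, hv₃] <;>
    first
      | exact hb.P44_triple_eq_zero (by decide) (by decide) (by decide) (by decide) (by decide)
      | (rw [L.form_mul_swap]; simp [hv₁, hv₂, hv₃])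

theorem IsPresBasis.form_mul_y₁ {α β : F}
    (hb : L.IsPresBasis b (P44 F α β)) (u v : L.carrier) :
    L.form (L.mul (b (yi 0)) u) v = L.pairX b u ⬝ᵥ P44FormY *ᵥ L.pairX b v := by
  have hv₁ := hb.2.1 (yi 0, yi 1, yi 4, 1) (by simp [P44])
  have hv₂ := hb.2.1 (yi 0, yi 2, yi 3, 1) (by simp [P44])
  simp only [triple, yi] at hv₁ hv₂
  refine hb.1.form_mul_eq_of_basis (fun j k => ?_) u v
  rcases j with j | j <;> rcases k with k | k <;> fin_cases j <;> fin_cases k <;>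
    simp [yi, hb.1.pairX_inl, hb.1.pairX_inr, P44FormY, mulVec, dotProduct, Fin.sum_univ_four,
      hv₁, hv₂] <;>
    first
      | exact hb.P44_triple_eq_zero (by decide) (by decide) (by decide) (by decide) (by decide)
      | (rw [L.form_mul_swap]; simp [hv₁, hv₂])

theorem IsStandardBasis.pairX_inr_succ_dotProduct_mulVec (hb : L.IsStandardBasis b)
    (A : Matrix (Fin 4) (Fin 4) F) (k l : Fin 4) :
    L.pairX b (b (yi k.succ)) ⬝ᵥ A *ᵥ L.pairX b (b (yi l.succ)) = A k l := by
  simp [yi, hb.pairX_inr, mulVec, dotProduct]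

variable (L) in
def pairXMatrix (b b' : Fin 5 ⊕ Fin 5 → L.carrier) : Matrix (Fin 4) (Fin 4) F :=
  of fun k => L.pairX b (b' (yi k.succ))

theorem IsStandardBasis.eq_mul_mul_transpose_of_form_mul {b' : Fin 5 ⊕ Fin 5 → L.carrier}
    (hb' : L.IsStandardBasis b') {z z' : L.carrier} {A A' : Matrix (Fin 4) (Fin 4) F}
    (hz : ∀ u v, L.form (L.mul z u) v = L.pairX b u ⬝ᵥ A *ᵥ L.pairX b v)
    (hz' : ∀ u v, L.form (L.mul z' u) v = L.pairX b' u ⬝ᵥ A' *ᵥ L.pairX b' v)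
    (hzz : z' - z ∈ L.centre) :
    A' = L.pairXMatrix b b' * A * (L.pairXMatrix b b')ᵀ := by
  rw [pairXMatrix, ← of_dotProduct_mulVec]
  ext k l
  rw [← hb'.pairX_inr_succ_dotProduct_mulVec A' k l, of_apply, ← hz', ← hz,
    L.mul_eq_of_sub_mem_centre hzz]

theorem P44FormX_isAlt (α β : F) : (P44FormX α β).IsAlt := by
  refine ⟨?_, fun i => ?_⟩
  · ext i j
    fin_cases i <;> fin_cases j <;> simp [P44FormX]
  · fin_cases i <;> simp [P44FormX]

theorem P44FormY_isAlt : (P44FormY : Matrix (Fin 4) (Fin 4) F).IsAlt := by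
  refine ⟨?_, fun i => ?_⟩
  · ext i j
    fin_cases i <;> fin_cases j <;> simp [P44FormY]
  · fin_cases i <;> simp [P44FormY]

theorem pfaffianFour_P44FormX (α β : F) : pfaffianFour (P44FormX α β) = β := by
  simp [pfaffianFour, P44FormX]

theorem pfaffianFour_P44FormY : pfaffianFour (P44FormY : Matrix (Fin 4) (Fin 4) F) = 1 := by
  simp [pfaffianFour, P44FormY]

theorem pfaffianFour_P44FormX_add_P44FormY (α β : F) :
    pfaffianFour (P44FormX α β + P44FormY) = β + α + 1 := by
  simp [pfaffianFour, P44FormX, P44FormY, add_assoc]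

end SAA

theorem P44_parameters_determined_general
    {F : Type u} [Field F] (L : SAA F)
    (b b' : Fin 5 ⊕ Fin 5 → L.carrier) (α β α' β' : F)
    (hb : L.IsPresBasis b (SAA.P44 F α β)) (hb' : L.IsPresBasis b' (SAA.P44 F α' β'))
    (hx : b' (SAA.xi 0) - b (SAA.xi 0) ∈ L.centre)
    (hy : b' (SAA.yi 0) - b (SAA.yi 0) ∈ L.centre) :
    α' = α ∧ β' = β := by
  set M := L.pairXMatrix b b'
  have hX : SAA.P44FormX α' β' = M * SAA.P44FormX α β * Mᵀ :=
    hb'.1.eq_mul_mul_transpose_of_form_mul hb.form_mul_x₁ hb'.form_mul_x₁ hx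
  have hY : SAA.P44FormY = M * SAA.P44FormY * Mᵀ :=
    hb'.1.eq_mul_mul_transpose_of_form_mul hb.form_mul_y₁ hb'.form_mul_y₁ hy
  have hXY :
      SAA.P44FormX α' β' + SAA.P44FormY = M * (SAA.P44FormX α β + SAA.P44FormY) * Mᵀ := by
    rw [mul_add, add_mul, ← hX, ← hY]
  have hdet : M.det = 1 := by
    simpa [pfaffianFour_mul_mul_transpose M SAA.P44FormY_isAlt, SAA.pfaffianFour_P44FormY]
      using (congrArg pfaffianFour hY).symm
  have hβ : β' = β := by
    simpa [pfaffianFour_mul_mul_transpose M (SAA.P44FormX_isAlt α β), hdet,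
      SAA.pfaffianFour_P44FormX] using congrArg pfaffianFour hX
  have hαβ : β' + α' + 1 = β + α + 1 := by
    simpa [pfaffianFour_mul_mul_transpose M ((SAA.P44FormX_isAlt α β).add SAA.P44FormY_isAlt),
      hdet, SAA.pfaffianFour_P44FormX_add_P44FormY] using congrArg pfaffianFour hXY
  exact ⟨by linear_combination hαβ - hβ, hβ⟩

/-- Lemma 2.5. For a nilpotent SAA of dimension 10 with isotropic
centre of dimension 4, `L³ = Z(L)`, of type C: the parameters `α, β` of a presentation
`𝒫₁₀^{(4,4)}(α,β)` are the same for all presentations with fixed `x₁ + Z(L)` and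
`y₁ + Z(L)`. -/
theorem P44_parameters_determined
    {F : Type u} [Field F] (L : SAA F) (h : L.Cond4C)
    (b b' : Fin 5 ⊕ Fin 5 → L.carrier) (α β α' β' : F)
    (hb : L.IsPresBasis b (SAA.P44 F α β)) (hb' : L.IsPresBasis b' (SAA.P44 F α' β'))
    (hx : b' (SAA.xi 0) - b (SAA.xi 0) ∈ L.centre)
    (hy : b' (SAA.yi 0) - b (SAA.yi 0) ∈ L.centre) :
    α' = α ∧ β' = β :=
  P44_parameters_determined_general L b b' α β α' β' hb hb' hx hy
end
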